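/- arXiv:2302.09784 — 4 statements merged into one kernel-verified Lean document; each statement's English description precedes it below -/
import Mathlib

section
/- Under the assumptions of the previous statement, φ(r) → -∞ as r → α_g⁺ and φ(r) → +∞ as r → ∞; consequently there exists a unique r ∈ (α_g, ∞) with φ(r) = 0, i.e. the gas density ρ_g is uniquely determined by (α_g, α_l). -/
open Real Set Filter Topology

/-- `φ(r) → -∞` as `r → α_g⁺`, `φ(r) → +∞` as `r → ∞`, and there
is a unique `r ∈ (α_g, ∞)` with `φ(r) = 0`. -/
theorem stmt_5 (αg αl Ag Al γg γl ρl0 p0 : ℝ)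
    (hαg : 0 < αg) (hαl : 0 < αl) (hAg : 0 < Ag) (hAl : 0 < Al)
    (hγg : 1 < γg) (hγl : 1 < γl) (hρl0 : 0 < ρl0) (hp0 : 0 < p0)
    (ζg ζl φ : ℝ → ℝ)
    (hζg : ∀ z, ζg z = Ag * z ^ γg)
    (hζl : ∀ z, ζl z = Al * (z ^ γl - ρl0 ^ γl) + p0)
    (hφ : ∀ r, φ r = ζg r - ζl (αl * r / (r - αg))) :
    Tendsto φ (nhdsWithin αg (Ioi αg)) atBot ∧
    Tendsto φ atTop atTop ∧
    ∃! r, r ∈ Ioi αg ∧ φ r = 0 := by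
  have hγg0 : (0:ℝ) < γg := by linarith
  have hγl0 : (0:ℝ) < γl := by linarith
  have hφ' : ∀ r, φ r = Ag * r ^ γg -
      (Al * ((αl * r / (r - αg)) ^ γl - ρl0 ^ γl) + p0) := by
    intro r; rw [hφ, hζg, hζl]
  -- inner function tends to +∞ as r → αg⁺
  have hgtop : Tendsto (fun r => αl * r / (r - αg)) (nhdsWithin αg (Ioi αg)) atTop := by
    simp only [div_eq_mul_inv]
    apply Tendsto.pos_mul_atTop (by positivity : (0:ℝ) < αl * αg)
    · exact ((continuous_const.mul continuous_id).tendsto αg).mono_left nhdsWithin_le_nhds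
    · apply tendsto_inv_nhdsGT_zero.comp
      rw [tendsto_nhdsWithin_iff]
      constructor
      · have h0 : Tendsto (fun r : ℝ => r - αg) (nhds αg) (nhds (αg - αg)) :=
          (continuous_id.sub continuous_const).tendsto αg
        rw [sub_self] at h0
        exact h0.mono_left nhdsWithin_le_nhds
      · filter_upwards [self_mem_nhdsWithin] with r hr
        simp only [mem_Ioi] at hr ⊢
        linarith
  -- φ → -∞ as r → αg⁺
  have hbot : Tendsto φ (nhdsWithin αg (Ioi αg)) atBot := by
    have h1 : Tendsto (fun r => Ag * r ^ γg + (Al * ρl0 ^ γl - p0))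
        (nhdsWithin αg (Ioi αg)) (𝓝 (Ag * αg ^ γg + (Al * ρl0 ^ γl - p0))) := by
      apply Tendsto.mono_left _ nhdsWithin_le_nhds
      apply Tendsto.add _ tendsto_const_nhds
      apply Tendsto.const_mul
      exact (Real.continuousAt_rpow_const αg γg (Or.inl hαg.ne')).tendsto
    have h2 : Tendsto (fun r => -(Al * (αl * r / (r - αg)) ^ γl))
        (nhdsWithin αg (Ioi αg)) atBot := by
      apply Filter.tendsto_neg_atBot_iff.mpr
      exact ((tendsto_rpow_atTop hγl0).comp hgtop).const_mul_atTop hAl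
    have := h1.add_atBot h2
    apply this.congr
    intro r; rw [hφ' r]; ring
  -- inner function tends to αl as r → ∞
  have hdtop : Tendsto (fun r => r - αg) atTop atTop := by
    simpa [sub_eq_add_neg] using tendsto_atTop_add_const_right atTop (-αg) tendsto_id
  have hglim : Tendsto (fun r => αl * r / (r - αg)) atTop (𝓝 αl) := by
    have h1 : Tendsto (fun r => αl + αl * αg / (r - αg)) atTop (𝓝 (αl + 0)) :=
      tendsto_const_nhds.add (tendsto_const_nhds.div_atTop hdtop)
    rw [add_zero] at h1
    apply h1.congr'
    filter_upwards [eventually_gt_atTop αg] with r hr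
    have hd : r - αg ≠ 0 := by linarith [hr]
    field_simp
    ring
  -- φ → +∞ as r → ∞
  have htop : Tendsto φ atTop atTop := by
    have h1 : Tendsto (fun r => Ag * r ^ γg) atTop atTop :=
      (tendsto_rpow_atTop hγg0).const_mul_atTop hAg
    have h2 : Tendsto (fun r => -(Al * ((αl * r / (r - αg)) ^ γl - ρl0 ^ γl) + p0))
        atTop (𝓝 (-(Al * (αl ^ γl - ρl0 ^ γl) + p0))) := by
      apply Tendsto.neg
      apply Tendsto.add _ tendsto_const_nhds
      apply Tendsto.const_mul
      apply Tendsto.sub _ tendsto_const_nhds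
      exact ((Real.continuousAt_rpow_const αl γl (Or.inl hαl.ne')).tendsto).comp hglim
    have := h1.atTop_add h2
    apply this.congr
    intro r; rw [hφ' r]; ring
  refine ⟨hbot, htop, ?_⟩
  -- strict monotonicity
  have hmono : StrictMonoOn φ (Ioi αg) := by
    intro r1 h1 r2 h2 h12
    simp only [mem_Ioi] at h1 h2
    rw [hφ' r1, hφ' r2]
    have hd1 : 0 < r1 - αg := by linarith
    have hd2 : 0 < r2 - αg := by linarith
    have hr1 : 0 < r1 := lt_trans hαg h1
    have hr2 : 0 < r2 := lt_trans hαg h2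
    have hgpos2 : 0 < αl * r2 / (r2 - αg) := by positivity
    have hglt : αl * r2 / (r2 - αg) < αl * r1 / (r1 - αg) := by
      rw [div_lt_div_iff₀ hd2 hd1]
      nlinarith [mul_lt_mul_of_pos_left h12 (mul_pos hαl hαg)]
    have h1lt : Ag * r1 ^ γg < Ag * r2 ^ γg := by
      apply mul_lt_mul_of_pos_left _ hAg
      exact Real.rpow_lt_rpow hr1.le h12 hγg0
    have h2lt : (αl * r2 / (r2 - αg)) ^ γl < (αl * r1 / (r1 - αg)) ^ γl :=
      Real.rpow_lt_rpow hgpos2.le hglt hγl0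
    nlinarith [mul_lt_mul_of_pos_left h2lt hAl]
  -- continuity on (αg, ∞)
  have hcont : ContinuousOn φ (Ioi αg) := by
    have hc : ContinuousOn (fun r => Ag * r ^ γg -
        (Al * ((αl * r / (r - αg)) ^ γl - ρl0 ^ γl) + p0)) (Ioi αg) := by
      apply ContinuousOn.sub
      · exact continuousOn_const.mul
          (continuousOn_id.rpow_const (fun x _ => Or.inr hγg0.le))
      · refine ContinuousOn.add (continuousOn_const.mul (ContinuousOn.sub ?_
          continuousOn_const)) continuousOn_const
        apply ContinuousOn.rpow_const
        · exact (continuousOn_const.mul continuousOn_id).div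
            (continuousOn_id.sub continuousOn_const)
            (fun x hx => by
              have hx' : αg < x := hx
              exact sub_ne_zero.mpr (ne_of_gt hx'))
        · exact fun x _ => Or.inr hγl0.le
    exact hc.congr fun r _ => hφ' r
  -- get a with φ a < 0
  have hne : (nhdsWithin αg (Ioi αg)).NeBot := nhdsGT_neBot αg
  obtain ⟨a, hfa, ha⟩ :=
    ((hbot.eventually (eventually_lt_atBot 0)).and self_mem_nhdsWithin).exists
  obtain ⟨b, hfb, hab⟩ :=
    ((htop.eventually (eventually_gt_atTop 0)).and (eventually_gt_atTop a)).exists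
  have ha' : αg < a := ha
  have hsub : Icc a b ⊆ Ioi αg := fun x hx => lt_of_lt_of_le ha' hx.1
  have hivt := intermediate_value_Icc hab.le (hcont.mono hsub)
  have h0mem : (0:ℝ) ∈ Icc (φ a) (φ b) := ⟨hfa.le, hfb.le⟩
  obtain ⟨r, hr, hr0⟩ := hivt h0mem
  have hrmem : r ∈ Ioi αg := hsub hr
  refine ⟨r, ⟨hrmem, hr0⟩, ?_⟩
  rintro y ⟨hy, hy0⟩
  exact hmono.injOn hy hrmem (by rw [hy0, hr0])
end

section
/- Let ρ_g, ρ_l, φ_g, φ_l, s_g, s_l > 0 with φ_g + φ_l = 1, and suppose dρ and dα satisfy the linear relations dρ_g = (1/φ_g)(dα_g - ρ_g dφ_g), dρ_l = (1/φ_l)(dα_l + ρ_l dφ_g), and s_g² dρ_g = s_l² dρ_l (as real numbers, treating the differentials as real variables). Then s_g² dρ_g = C²(ρ_l dα_g + ρ_g dα_l), where C² = s_l² s_g²/(φ_g ρ_l s_l² + φ_l ρ_g s_g²); i.e. the common pressure increment dp = s_g² dρ_g satisfies dp = C²(ρ_l dα_g + ρ_g dα_l). -/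
/-- the algebraic pressure-increment relation
`dp = s_g² dρ_g = C² (ρ_l dα_g + ρ_g dα_l)` with
`C² = s_l² s_g² / (φ_g ρ_l s_l² + φ_l ρ_g s_g²)`. -/
theorem stmt_9 (ρg ρl φg φl sg sl dαg dαl dφg dρg dρl : ℝ)
    (hρg : 0 < ρg) (hρl : 0 < ρl) (hφg : 0 < φg) (hφl : 0 < φl)
    (hsg : 0 < sg) (hsl : 0 < sl) (hφ : φg + φl = 1)
    (h1 : dρg = (1 / φg) * (dαg - ρg * dφg))
    (h2 : dρl = (1 / φl) * (dαl + ρl * dφg))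
    (h3 : sg ^ 2 * dρg = sl ^ 2 * dρl) :
    sg ^ 2 * dρg =
      (sl ^ 2 * sg ^ 2 / (φg * ρl * sl ^ 2 + φl * ρg * sg ^ 2)) *
        (ρl * dαg + ρg * dαl) := by
  have hD : (0:ℝ) < φg * ρl * sl ^ 2 + φl * ρg * sg ^ 2 := by positivity
  rw [div_mul_eq_mul_div, eq_div_iff hD.ne']
  field_simp at h1 h2
  linear_combination (sl ^ 2 * sg ^ 2 * ρl) * h1 + (sg ^ 2 * sl ^ 2 * ρg) * h2 + (φl * ρg * sg ^ 2) * h3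
end

section
/- Under the hypotheses of the differential pressure-balance setup, the increment of the gas density satisfies dρ_g = ρ_g ρ_l s_l² (ρ_l dα_g + ρ_g dα_l) / (α_l ρ_g² s_g² + α_g ρ_l² s_l²), where α_k = φ_k ρ_k. -/
/-- the increment of the gas density satisfies
`dρ_g = ρ_g ρ_l s_l² (ρ_l dα_g + ρ_g dα_l) / (α_l ρ_g² s_g² + α_g ρ_l² s_l²)`,
where `α_k = φ_k ρ_k`. -/
theorem stmt_11 (ρg ρl φg φl sg sl dαg dαl dφg dρg dρl : ℝ)
    (hρg : 0 < ρg) (hρl : 0 < ρl) (hφg : 0 < φg) (hφl : 0 < φl)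
    (hsg : 0 < sg) (hsl : 0 < sl) (hφ : φg + φl = 1)
    (h1 : dρg = (1 / φg) * (dαg - ρg * dφg))
    (h2 : dρl = (1 / φl) * (dαl + ρl * dφg))
    (h3 : sg ^ 2 * dρg = sl ^ 2 * dρl) :
    dρg = ρg * ρl * sl ^ 2 * (ρl * dαg + ρg * dαl) /
      ((φl * ρl) * ρg ^ 2 * sg ^ 2 + (φg * ρg) * ρl ^ 2 * sl ^ 2) := by
  have hD : (φl * ρl) * ρg ^ 2 * sg ^ 2 + (φg * ρg) * ρl ^ 2 * sl ^ 2 ≠ 0 := by positivity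
  have h1' : φg * dρg = dαg - ρg * dφg := by
    rw [h1]; field_simp
  have h2' : φl * dρl = dαl + ρl * dφg := by
    rw [h2]; field_simp
  rw [eq_div_iff hD]
  linear_combination (ρg*ρl^2*sl^2) * h1' + (ρg^2*ρl*sl^2) * h2' + (ρg^2*ρl*φl) * h3
end

section
/- Let ρ^m, ρ^{m+1} > 0, φ^m, φ^{m+1} ≥ 0, and set α^m = φ^m ρ^m, α^{m+1} = φ^{m+1} ρ^{m+1}. Let ζ be C¹ on (0,∞) with ζ' ≥ 0, e the potential with e'(z) = ζ(z)/z², and f(z) = z e(z) (so f'(z) = e(z) + ζ(z)/z and ζ'(z) = z f''(z)). Then (α^{m+1} − α^m) f'(ρ^{m+1}) ≥ α^{m+1} e(ρ^{m+1}) − α^m e(ρ^m) + ζ(ρ^{m+1})(φ^{m+1} − φ^m). -/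
open Real Set intervalIntegral

theorem aux_mono (ζ ζ' : ℝ → ℝ)
    (hζ : ∀ z > 0, HasDerivAt ζ (ζ' z) z)
    (hζ'nonneg : ∀ z > 0, 0 ≤ ζ' z) : MonotoneOn ζ (Ioi (0 : ℝ)) := by
  apply monotoneOn_of_deriv_nonneg (convex_Ioi 0)
  · exact fun z hz => (hζ z hz).continuousAt.continuousWithinAt
  · intro z hz
    rw [interior_Ioi] at hz
    exact (hζ z hz).differentiableAt.differentiableWithinAt
  · intro z hz
    rw [interior_Ioi] at hz
    rw [(hζ z hz).deriv]
    exact hζ'nonneg z hz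

/-- discrete potential-energy inequality:
`(α^{m+1} − α^m) f'(ρ^{m+1}) ≥ α^{m+1} e(ρ^{m+1}) − α^m e(ρ^m) + ζ(ρ^{m+1})(φ^{m+1} − φ^m)`
where `α = φρ`, `e' = ζ/z²`, `f(z) = z e(z)` so `f'(z) = e(z) + ζ(z)/z`. -/
theorem stmt_13 (ρm ρm1 φm φm1 αm αm1 ρref : ℝ)
    (hρm : 0 < ρm) (hρm1 : 0 < ρm1) (hφm : 0 ≤ φm) (hφm1 : 0 ≤ φm1)
    (hαm : αm = φm * ρm) (hαm1 : αm1 = φm1 * ρm1) (hρref : 0 < ρref)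
    (ζ ζ' e : ℝ → ℝ)
    (hζ : ∀ z > 0, HasDerivAt ζ (ζ' z) z)
    (hζ'cont : ContinuousOn ζ' (Ioi (0 : ℝ)))
    (hζ'nonneg : ∀ z > 0, 0 ≤ ζ' z)
    (he : ∀ z > 0, e z = ∫ s in ρref..z, ζ s / s ^ 2) :
    (αm1 - αm) * (e ρm1 + ζ ρm1 / ρm1) ≥
      αm1 * e ρm1 - αm * e ρm + ζ ρm1 * (φm1 - φm) := by
  subst hαm hαm1
  have hmono := aux_mono ζ ζ' hζ hζ'nonneg
  have hζcont : ContinuousOn ζ (Ioi (0 : ℝ)) :=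
    fun z hz => (hζ z hz).continuousAt.continuousWithinAt
  -- interval integrability of ζ s / s^2 on positive intervals
  have hint : ∀ a b : ℝ, 0 < a → 0 < b →
      IntervalIntegrable (fun s => ζ s / s ^ 2) MeasureTheory.volume a b := by
    intro a b ha hb
    apply ContinuousOn.intervalIntegrable
    have hsub : uIcc a b ⊆ Ioi (0 : ℝ) := by
      intro x hx
      have := hx.1
      have h1 : min a b ≤ x := hx.1
      have h2 : 0 < min a b := lt_min ha hb
      exact lt_of_lt_of_le h2 h1
    apply ContinuousOn.div (hζcont.mono hsub)
    · exact (continuous_pow 2).continuousOn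
    · intro x hx
      exact pow_ne_zero 2 (ne_of_gt (hsub hx))
  -- e ρm1 - e ρm is the interval integral from ρm to ρm1
  have hsub : e ρm1 - e ρm = ∫ s in ρm..ρm1, ζ s / s ^ 2 := by
    rw [he ρm1 hρm1, he ρm hρm]
    rw [← intervalIntegral.integral_add_adjacent_intervals (hint ρref ρm hρref hρm)
      (hint ρm ρm1 hρm hρm1)]
    ring
  -- integrability of the constant comparison function
  have hintc : ∀ a b : ℝ, 0 < a → 0 < b →
      IntervalIntegrable (fun s => ζ ρm1 / s ^ 2) MeasureTheory.volume a b := by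
    intro a b ha hb
    apply ContinuousOn.intervalIntegrable
    have hsub : uIcc a b ⊆ Ioi (0 : ℝ) := fun x hx =>
      lt_of_lt_of_le (lt_min ha hb) hx.1
    apply ContinuousOn.div continuousOn_const ((continuous_pow 2).continuousOn)
    intro x hx
    exact pow_ne_zero 2 (ne_of_gt (hsub hx))
  -- compute the comparison integral
  have hcomp : (∫ s in ρm..ρm1, ζ ρm1 / s ^ 2) = ζ ρm1 * (ρm⁻¹ - ρm1⁻¹) := by
    have h0 : (0 : ℝ) ∉ uIcc ρm ρm1 := by
      intro h
      have : 0 < min ρm ρm1 := lt_min hρm hρm1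
      have := h.1
      linarith
    have : (∫ s in ρm..ρm1, ζ ρm1 / s ^ 2)
        = ζ ρm1 * ∫ s in ρm..ρm1, (s : ℝ) ^ (-2 : ℤ) := by
      rw [← intervalIntegral.integral_const_mul]
      apply intervalIntegral.integral_congr
      intro x hx
      have hx0 : x ≠ 0 := fun h => h0 (h ▸ hx)
      show ζ ρm1 / x ^ 2 = ζ ρm1 * x ^ (-2 : ℤ)
      have hpow : (x : ℝ) ^ (-2 : ℤ) = (x ^ 2)⁻¹ := by
        rw [zpow_neg]; norm_cast
      rw [hpow, div_eq_mul_inv]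
    rw [this, integral_zpow (Or.inr ⟨by norm_num, h0⟩)]
    have hρm0 : ρm ≠ 0 := ne_of_gt hρm
    have hρm10 : ρm1 ≠ 0 := ne_of_gt hρm1
    rw [show (-2 + 1 : ℤ) = -1 by norm_num, zpow_neg, zpow_neg, zpow_one, zpow_one]
    ring
  -- key inequality: ∫ ζ s / s² ≤ ∫ ζ ρm1 / s²
  have hkey : (∫ s in ρm..ρm1, ζ s / s ^ 2) ≤ ζ ρm1 * (ρm⁻¹ - ρm1⁻¹) := by
    rw [← hcomp]
    rcases le_total ρm ρm1 with hle | hle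
    · apply intervalIntegral.integral_mono_on hle (hint ρm ρm1 hρm hρm1)
        (hintc ρm ρm1 hρm hρm1)
      intro x hx
      have hx0 : 0 < x := lt_of_lt_of_le hρm hx.1
      have hζle : ζ x ≤ ζ ρm1 := hmono hx0 hρm1 hx.2
      apply div_le_div_of_nonneg_right hζle (by positivity) |>.trans_eq rfl
    · rw [intervalIntegral.integral_symm ρm1 ρm, intervalIntegral.integral_symm ρm1 ρm,
        neg_le_neg_iff]
      apply intervalIntegral.integral_mono_on hle (hintc ρm1 ρm hρm1 hρm)
        (hint ρm1 ρm hρm1 hρm)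
      intro x hx
      have hx0 : 0 < x := lt_of_lt_of_le hρm1 hx.1
      have hζle : ζ ρm1 ≤ ζ x := hmono hρm1 hx0 hx.1
      exact div_le_div_of_nonneg_right hζle (by positivity) |>.trans_eq rfl
  -- combine
  have hkey2 : ρm * (e ρm1 - e ρm) ≤ ζ ρm1 * (1 - ρm / ρm1) := by
    rw [hsub]
    have := mul_le_mul_of_nonneg_left hkey hρm.le
    calc ρm * ∫ s in ρm..ρm1, ζ s / s ^ 2 ≤ ρm * (ζ ρm1 * (ρm⁻¹ - ρm1⁻¹)) := this
      _ = ζ ρm1 * (1 - ρm / ρm1) := by field_simp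
  rw [ge_iff_le, ← sub_nonneg]
  have heq : (φm1 * ρm1 - φm * ρm) * (e ρm1 + ζ ρm1 / ρm1) -
      (φm1 * ρm1 * e ρm1 - φm * ρm * e ρm + ζ ρm1 * (φm1 - φm)) =
      φm * (ζ ρm1 * (1 - ρm / ρm1) - ρm * (e ρm1 - e ρm)) := by
    field_simp
    ring
  rw [heq]
  exact mul_nonneg hφm (sub_nonneg.2 hkey2)
end
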